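/- arXiv:2006.05099 — 6 statements merged into one kernel-verified Lean document; each statement's English description precedes it below -/
import Mathlib

section
/- If ⊢ is a divisible upper relation on 𝖥S, then ⊢ is a semicut relation if and only if ⊢ is cut-transitive. -/
open scoped Classical

/-! Common definitions: entailment/cover relations on finite subsets,
tight subsets, the tight spectrum, quasi-ideals, and topological notions. -/

/-- `H` is a *selection* of the finite family `𝒢`: it meets every member of `𝒢`. -/
def IsSelection {S : Type*} (𝒢 : Finset (Finset S)) (H : Finset S) : Prop :=
  ∀ I ∈ 𝒢, ∃ x ∈ I, x ∈ H

/-- Cut-composition `r • s` of relations. -/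
def CutComp {A B C : Type*} (r : Finset A → Finset B → Prop)
    (s : Finset B → Finset C → Prop) (F : Finset A) (G : Finset C) : Prop :=
  ∃ ℱ 𝒢 : Finset (Finset B),
    (∀ H ∈ ℱ, r F H) ∧
    (∀ K : Finset B, IsSelection ℱ K → ∃ I ∈ 𝒢, I ⊆ K) ∧
    (∀ I ∈ 𝒢, s I G)

/-- Upper relation: `F ⊢ G ⊆ H` implies `F ⊢ H`. -/
def IsUpperRel {A B : Type*} (r : Finset A → Finset B → Prop) : Prop :=
  ∀ F G H, r F G → G ⊆ H → r F H

/-- Lower relation: `F ⊢ G` and `F ⊆ E` imply `E ⊢ G`. -/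
def IsLowerRel {A B : Type*} (r : Finset A → Finset B → Prop) : Prop :=
  ∀ F G E, r F G → F ⊆ E → r E G

/-- `F ⊢_{1∃} G` iff `F ⊢ {g}` for some `g ∈ G`. -/
def OneExists {A B : Type*} (r : Finset A → Finset B → Prop)
    (F : Finset A) (G : Finset B) : Prop :=
  ∃ g ∈ G, r F {g}

/-- Cut-transitivity: `⊢ • ⊢ ⊆ ⊢`. -/
def CutTransitive {S : Type*} (r : Finset S → Finset S → Prop) : Prop :=
  ∀ F G, CutComp r r F G → r F G

/-- Divisibility: `⊢ ⊆ ⊢ • ⊢_{1∃}`. -/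
def Divisible {S : Type*} (r : Finset S → Finset S → Prop) : Prop :=
  ∀ F G, r F G → CutComp r (OneExists r) F G

/-- A strong idempotent: monotone, cut-transitive and divisible. -/
def StrongIdempotent {S : Type*} (r : Finset S → Finset S → Prop) : Prop :=
  IsUpperRel r ∧ IsLowerRel r ∧ CutTransitive r ∧ Divisible r

/-- Gentzen's cut rule. -/
def CutRel {S : Type*} (r : Finset S → Finset S → Prop) : Prop :=
  ∀ (s : S) (F G : Finset S), r (insert s F) G → r F (insert s G) → r F G

/-- An entailment: a monotone cut relation. -/
def Entailment {S : Type*} (r : Finset S → Finset S → Prop) : Prop :=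
  IsUpperRel r ∧ IsLowerRel r ∧ CutRel r

/-- 1-reflexivity: `{s} ⊢ {s}` for all `s`. -/
def OneReflexive {S : Type*} (r : Finset S → Finset S → Prop) : Prop :=
  ∀ s : S, r {s} {s}

/-- The relation `⊩` induced by `⊢`:
`F ⊩ G` iff every `H` with `H ⊢ {f}` for all `f ∈ F` satisfies `H ⊢ G`. -/
def Vdash {S : Type*} (r : Finset S → Finset S → Prop)
    (F G : Finset S) : Prop :=
  ∀ H : Finset S, (∀ f ∈ F, r H {f}) → r H G

/-- `⊢` is auxiliary to `⊨`. -/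
def AuxiliaryTo {S T : Type*} (r : Finset S → Finset T → Prop)
    (v : Finset S → Finset S → Prop) : Prop :=
  ∀ (F H : Finset S) (G : Finset T), (∀ h ∈ H, r (insert h F) G) → v F H → r F G

/-- `⊢` is dual-auxiliary to `⊨`. -/
def DualAuxiliaryTo {S : Type*} (r v : Finset S → Finset S → Prop) : Prop :=
  ∀ F G H : Finset S, r H G → (∀ h ∈ H, v F (insert h G)) → r F G

/-- A semicut relation: self-dual-auxiliary. -/
def Semicut {S : Type*} (r : Finset S → Finset S → Prop) : Prop :=
  DualAuxiliaryTo r r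

/-- A cover relation: a strong idempotent auxiliary to `⊩`. -/
def CoverRelation {S : Type*} (r : Finset S → Finset S → Prop) : Prop :=
  StrongIdempotent r ∧ AuxiliaryTo r (Vdash r)

/-- Tight subset. -/
def TightSet {S : Type*} (r : Finset S → Finset S → Prop) (T : Set S) : Prop :=
  ∀ G : Finset S, (∃ F : Finset S, ↑F ⊆ T ∧ r F G) ↔ ∃ g ∈ G, g ∈ T

/-- Round subset. -/
def RoundSet {S : Type*} (r : Finset S → Finset S → Prop) (R : Set S) : Prop :=
  ∀ x ∈ R, ∃ F : Finset S, ↑F ⊆ R ∧ r F {x}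

/-- Prime subset. -/
def PrimeSet {S : Type*} (r : Finset S → Finset S → Prop) (P : Set S) : Prop :=
  ∀ F G : Finset S, ↑F ⊆ P → r F G → ∃ g ∈ G, g ∈ P

/-- The tight spectrum: nonempty tight subsets. -/
def TightSpec {S : Type*} (r : Finset S → Finset S → Prop) : Type _ :=
  {T : Set S // TightSet r T ∧ T.Nonempty}

/-- The underlying set of points of an element of the tight spectrum. -/
def TightSpec.pts {S : Type*} {r : Finset S → Finset S → Prop} (T : TightSpec r) : Set S :=
  Subtype.val T

/-- The spectrum topology, generated by the subbasic sets `𝖳_p = {T | p ∈ T}`. -/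
instance TightSpec.instTopologicalSpace {S : Type*} (r : Finset S → Finset S → Prop) :
    TopologicalSpace (TightSpec r) :=
  TopologicalSpace.generateFrom (Set.range fun p : S => {T : TightSpec r | p ∈ T.pts})

/-- `𝖳_F = {T ∈ 𝖳^S : F ⊆ T}`. -/
def TightSpec.TF {S : Type*} (r : Finset S → Finset S → Prop) (F : Finset S) :
    Set (TightSpec r) :=
  {T : TightSpec r | ↑F ⊆ T.pts}

/-- `𝖳^G = {T ∈ 𝖳^S : T ∩ G ≠ ∅}`. -/
def TightSpec.TG {S : Type*} (r : Finset S → Finset S → Prop) (G : Finset S) :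
    Set (TightSpec r) :=
  {T : TightSpec r | ∃ g ∈ G, g ∈ T.pts}

/-- `p ⋐ q`: every open cover of `q` has a finite subcover of `p`. -/
def CompactlyContained {X : Type*} [TopologicalSpace X] (p q : Set X) : Prop :=
  ∀ 𝒰 : Set (Set X), (∀ u ∈ 𝒰, IsOpen u) → q ⊆ ⋃₀ 𝒰 →
    ∃ 𝒱 : Finset (Set X), ↑𝒱 ⊆ 𝒰 ∧ p ⊆ ⋃₀ ↑𝒱

/-- Core compactness. -/
def CoreCompact (X : Type*) [TopologicalSpace X] : Prop :=
  ∀ p : Set X, IsOpen p → ∀ x ∈ p, ∃ q : Set X, IsOpen q ∧ x ∈ q ∧ CompactlyContained q p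

/-- Core coherence. -/
def CoreCoherent (X : Type*) [TopologicalSpace X] : Prop :=
  ∀ p q s : Set X, IsOpen p → IsOpen q → IsOpen s →
    CompactlyContained p q → CompactlyContained p s → CompactlyContained p (q ∩ s)

/-- Sobriety: each irreducible closed set is the closure of a unique point. -/
def SoberSpace (X : Type*) [TopologicalSpace X] : Prop :=
  ∀ C : Set X, IsIrreducible C → IsClosed C → ∃! x : X, C = closure {x}

/-- Stably locally compact: core compact, core coherent and sober. -/
def StablyLocallyCompact (X : Type*) [TopologicalSpace X] : Prop :=
  CoreCompact X ∧ CoreCoherent X ∧ SoberSpace X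

/-- The specialisation preorder: `x → y` iff every open set containing `y` contains `x`. -/
def SpecTo {X : Type*} [TopologicalSpace X] (x y : X) : Prop :=
  ∀ U : Set X, IsOpen U → y ∈ U → x ∈ U

/-- Saturation of a subset. -/
def satOf {X : Type*} [TopologicalSpace X] (D : Set X) : Set X :=
  {x | ∃ y ∈ D, SpecTo x y}

/-- Saturated subsets. -/
def IsSaturatedSet {X : Type*} [TopologicalSpace X] (K : Set X) : Prop :=
  K = satOf K

/-- The patch topology: generated by open sets together with complements of
compact saturated sets. -/
def patchTopology (X : Type*) [TopologicalSpace X] : TopologicalSpace X :=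
  TopologicalSpace.generateFrom
    ({U : Set X | IsOpen U} ∪ {V : Set X | ∃ K : Set X, IsCompact K ∧ IsSaturatedSet K ∧ V = Kᶜ})

/-- Very dense subset: the whole space is both its saturation and its patch-closure. -/
def VeryDense {X : Type*} [TopologicalSpace X] (D : Set X) : Prop :=
  satOf D = Set.univ ∧ @Dense X (patchTopology X) D

/-- A subbasis: a covering family of open sets generating the topology. -/
def IsSubbasis {X : Type*} [t : TopologicalSpace X] (S : Set (Set X)) : Prop :=
  (∀ p ∈ S, IsOpen p) ∧ ⋃₀ S = Set.univ ∧ TopologicalSpace.generateFrom S = t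

/-- The compact cover relation `⊢_⋐` on the finite subsets of a family `S` of
subsets of a space `X`: `F ⊢ G` iff `⋂F ⋐ ⋃G`. -/
def subCover {X : Type*} [TopologicalSpace X] (S : Set (Set X)) :
    Finset ↥S → Finset ↥S → Prop := fun F G =>
  CompactlyContained (⋂ p ∈ F, (p : Set X)) (⋃ p ∈ G, (p : Set X))

/-- `∩`-roundness of a family of open sets. -/
def CapRound {X : Type*} [TopologicalSpace X] (S : Set (Set X)) : Prop :=
  ∀ p ∈ S, ∀ x ∈ p, ∃ F : Finset ↥S,
    x ∈ (⋂ q ∈ F, (q : Set X)) ∧ CompactlyContained (⋂ q ∈ F, (q : Set X)) p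

/-- A pseudosubbasis: a `∩`-round, `T0`-separating family of open sets. -/
def IsPseudoSubbasis {X : Type*} [TopologicalSpace X] (S : Set (Set X)) : Prop :=
  (∀ p ∈ S, IsOpen p) ∧ CapRound S ∧
    ∀ x y : X, x ≠ y → ∃ p ∈ S, (x ∈ p ∧ y ∉ p) ∨ (y ∈ p ∧ x ∉ p)

/-- A proximal map: continuous and preserving compact containment under preimages. -/
def Proximal {Y X : Type*} [TopologicalSpace Y] [TopologicalSpace X] (φ : Y → X) : Prop :=
  Continuous φ ∧ ∀ O N : Set X, IsOpen O → IsOpen N →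
    CompactlyContained O N → CompactlyContained (φ ⁻¹' O) (φ ⁻¹' N)

/-- `𝒬↓`: the finite sets `F` with `F ⊢ 𝒢_⋔` for some finite `𝒢 ⊆ 𝒬`. -/
def downSet {S : Type*} (r : Finset S → Finset S → Prop) (Q : Set (Finset S)) :
    Set (Finset S) :=
  {F | ∃ 𝒢 : Finset (Finset S), ↑𝒢 ⊆ Q ∧ ∀ H : Finset S, IsSelection 𝒢 H → r F H}

/-- Quasi-ideal: `𝒬 = 𝒬↓`. -/
def QuasiIdeal {S : Type*} (r : Finset S → Finset S → Prop) (Q : Set (Finset S)) : Prop :=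
  downSet r Q = Q

/-- `G^⊣ = {F : F ⊢ G}`. -/
def polar {S : Type*} (r : Finset S → Finset S → Prop) (G : Finset S) : Set (Finset S) :=
  {F | r F G}

/-- The way-below relation in the complete lattice of quasi-ideals (where the join
of a family `𝒟` is `(⋃₀𝒟)↓`): `Q ≪ R` iff every nonempty directed family of
quasi-ideals whose join contains `R` has a member containing `Q`. -/
def WayBelowQI {S : Type*} (r : Finset S → Finset S → Prop)
    (Q R : Set (Finset S)) : Prop :=
  ∀ 𝒟 : Set (Set (Finset S)), (∀ P ∈ 𝒟, QuasiIdeal r P) → 𝒟.Nonempty →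
    DirectedOn (· ⊆ ·) 𝒟 → R ⊆ downSet r (⋃₀ 𝒟) → ∃ P ∈ 𝒟, Q ⊆ P

/-!
Semicut ⇒ cut-transitive: to derive `F ⊢ G` from `ℱ` and `𝒢`, prove `F ⊢ G ∪ D` for all `D` by
induction on `|⋃ℱ \ D|`. Either `D` contains a member of `ℱ`, or `⋃ℱ \ D` is a selection
of `ℱ`, hence contains some `I ∈ 𝒢`, and the semicut rule applied to `I ⊢ G ∪ D` reduces the
goal to the instances `F ⊢ G ∪ D ∪ {i}`, `i ∈ I ⊆ ⋃ℱ \ D`.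

Cut-transitive ⇒ semicut: dividing `F ⊢ G ∪ {h}` and then dividing once more the resulting
`I ⊢ {g}` with `g ∈ G` shows, by associativity of cut-composition, that `F ⊢ J` for a family of
`J` whose selections all contain either `h` or some `I'` with `I' ⊢ G`; an `I ⊢ {h}` is read as
a composition through the family `{{h}}`. Taking these families together for all `h ∈ H`,
a selection either contains `H ⊢ G` or some such `I'`.
-/

section CutComp

variable {A B C D : Type*}

theorem CutComp.mono_left {r r' : Finset A → Finset B → Prop} {s : Finset B → Finset C → Prop}
    {F : Finset A} {G : Finset C} (h : ∀ H, r F H → r' F H) (hc : CutComp r s F G) :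
    CutComp r' s F G := by
  obtain ⟨ℱ, 𝒢, hℱ, hsel, h𝒢⟩ := hc
  exact ⟨ℱ, 𝒢, fun H hH => h H (hℱ H hH), hsel, h𝒢⟩

theorem CutComp.mono_right {r : Finset A → Finset B → Prop} {s s' : Finset B → Finset C → Prop}
    {F : Finset A} {G G' : Finset C} (h : ∀ I, s I G → s' I G') (hc : CutComp r s F G) :
    CutComp r s' F G' := by
  obtain ⟨ℱ, 𝒢, hℱ, hsel, h𝒢⟩ := hc
  exact ⟨ℱ, 𝒢, hℱ, hsel, fun I hI => h I (h𝒢 I hI)⟩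

theorem cutComp_singleton {r : Finset A → Finset B → Prop} {s : Finset B → Finset C → Prop}
    {F : Finset A} {G : Finset C} {b : B} (hr : r F {b}) (hs : s {b} G) : CutComp r s F G := by
  refine ⟨{{b}}, {{b}}, by simpa using hr, fun K hK => ⟨{b}, by simp, ?_⟩, by simpa using hs⟩
  simpa using hK {b} (by simp)

/-- Finite distributivity of "meets every member" over unions of choices. -/
theorem exists_isSelection_of_isSelection_image_piFinset {ι : Type*} [Fintype ι] [DecidableEq ι]
    {t : ι → Finset (Finset B)} {K : Finset B}
    (hK : IsSelection ((Fintype.piFinset t).image fun c => Finset.univ.biUnion c) K) :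
    ∃ i, IsSelection (t i) K := by
  by_contra! hno
  simp only [IsSelection, not_forall, not_exists, not_and] at hno
  choose c hc hcK using hno
  obtain ⟨x, hx, hxK⟩ := hK _ (Finset.mem_image_of_mem _ (Fintype.mem_piFinset.mpr hc))
  obtain ⟨i, -, hxi⟩ := Finset.mem_biUnion.mp hx
  exact hcK i x hxi hxK

theorem cutComp_assoc_of_isUpperRel {r₁ : Finset A → Finset B → Prop}
    {r₂ : Finset B → Finset C → Prop} {s : Finset C → Finset D → Prop} (hu : IsUpperRel r₂)
    {F : Finset A} {G : Finset D} (hc : CutComp r₁ (CutComp r₂ s) F G) :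
    CutComp (CutComp r₁ r₂) s F G := by
  obtain ⟨ℱ, 𝒢, hℱ, hsel, h𝒢⟩ := hc
  choose! ℱ' 𝒢' hℱ' hsel' h𝒢' using h𝒢
  refine ⟨(Fintype.piFinset fun I : 𝒢 => ℱ' I).image fun c => Finset.univ.biUnion c,
    𝒢.biUnion 𝒢', ?_, fun K hK => ?_, ?_⟩
  · simp only [Finset.mem_image, Fintype.mem_piFinset]
    rintro _ ⟨c, hc, rfl⟩
    refine ⟨ℱ, 𝒢, hℱ, hsel, fun I hI => hu _ _ _ (hℱ' I hI _ (hc ⟨I, hI⟩)) ?_⟩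
    exact Finset.subset_biUnion_of_mem c (Finset.mem_univ _)
  · obtain ⟨⟨I, hI⟩, hIK⟩ := exists_isSelection_of_isSelection_image_piFinset hK
    obtain ⟨I', hI', hI'K⟩ := hsel' I hI K hIK
    exact ⟨I', Finset.mem_biUnion.mpr ⟨I, hI, hI'⟩, hI'K⟩
  · simp only [Finset.mem_biUnion]
    rintro I' ⟨I, hI, hI'⟩
    exact h𝒢' I hI I' hI'

end CutComp

section Semicut

variable {S : Type*} {r : Finset S → Finset S → Prop}

theorem isSelection_sup_sdiff {ℱ : Finset (Finset S)} {D : Finset S} (h : ∀ J ∈ ℱ, ¬J ⊆ D) :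
    IsSelection ℱ (ℱ.sup id \ D) := by
  intro J hJ
  obtain ⟨x, hxJ, hxD⟩ := Finset.not_subset.mp (h J hJ)
  exact ⟨x, hxJ, Finset.mem_sdiff.mpr ⟨Finset.le_sup (f := id) hJ hxJ, hxD⟩⟩

theorem Semicut.rel_union_of_cutComp (hu : IsUpperRel r) (hsc : Semicut r)
    {F G : Finset S} {ℱ 𝒢 : Finset (Finset S)} (hℱ : ∀ J ∈ ℱ, r F J)
    (hsel : ∀ K, IsSelection ℱ K → ∃ I ∈ 𝒢, I ⊆ K) (h𝒢 : ∀ I ∈ 𝒢, r I G) (D : Finset S) :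
    r F (G ∪ D) := by
  by_cases hD : ∃ J ∈ ℱ, J ⊆ D
  · obtain ⟨J, hJ, hJD⟩ := hD
    exact hu _ _ _ (hℱ J hJ) (hJD.trans Finset.subset_union_right)
  · push Not at hD
    obtain ⟨I, hI, hIK⟩ := hsel _ (isSelection_sup_sdiff hD)
    refine hsc F (G ∪ D) I (hu _ _ _ (h𝒢 I hI) Finset.subset_union_left) fun i hi => ?_
    have hi' : i ∈ ℱ.sup id \ D := hIK hi
    have := hsc.rel_union_of_cutComp hu hℱ hsel h𝒢 (insert i D)
    rwa [Finset.union_insert] at this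
termination_by (ℱ.sup id \ D).card
decreasing_by
  rw [Finset.sdiff_insert]
  exact Finset.card_erase_lt_of_mem hi'

theorem Semicut.cutTransitive (hu : IsUpperRel r) (hsc : Semicut r) : CutTransitive r := by
  rintro F G ⟨ℱ, 𝒢, hℱ, hsel, h𝒢⟩
  simpa using hsc.rel_union_of_cutComp hu hℱ hsel h𝒢 ∅

theorem CutTransitive.cutComp_of_cutComp_cutComp (hu : IsUpperRel r) (hct : CutTransitive r)
    {s : Finset S → Finset S → Prop} {F G : Finset S} (hc : CutComp r (CutComp r s) F G) :
    CutComp r s F G :=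
  (cutComp_assoc_of_isUpperRel hu hc).mono_left fun H => hct F H

theorem cutComp_mem_or_of_rel_insert (hu : IsUpperRel r) (hd : Divisible r)
    (hct : CutTransitive r) {F G : Finset S} {a : S} (h : r F (insert a G)) :
    CutComp r (fun I G => a ∈ I ∨ r I G) F G := by
  refine hct.cutComp_of_cutComp_cutComp hu ((hd _ _ h).mono_right ?_)
  rintro I ⟨x, hx, hIx⟩
  rcases Finset.mem_insert.mp hx with rfl | hxG
  · exact cutComp_singleton hIx (Or.inl (Finset.mem_singleton_self x))
  · refine (hd _ _ hIx).mono_right ?_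
    rintro I' ⟨y, hy, hI'y⟩
    rw [Finset.mem_singleton] at hy
    subst hy
    exact Or.inr (hu _ _ _ hI'y (Finset.singleton_subset_iff.mpr hxG))

theorem cutComp_of_rel_of_forall_cutComp_mem_or {F G H : Finset S} (hHG : r H G)
    (h : ∀ a ∈ H, CutComp r (fun I G => a ∈ I ∨ r I G) F G) : CutComp r r F G := by
  choose! ℱ 𝒢 hℱ hsel h𝒢 using h
  refine ⟨H.biUnion ℱ, insert H (H.biUnion fun a => (𝒢 a).filter (r · G)), ?_, fun K hK => ?_, ?_⟩
  · simp only [Finset.mem_biUnion]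
    rintro J ⟨a, ha, hJ⟩
    exact hℱ a ha J hJ
  · by_cases hHK : H ⊆ K
    · exact ⟨H, Finset.mem_insert_self _ _, hHK⟩
    · obtain ⟨a, ha, haK⟩ := Finset.not_subset.mp hHK
      have hKa : IsSelection (ℱ a) K := fun J hJ =>
        hK J (Finset.mem_biUnion.mpr ⟨a, ha, hJ⟩)
      obtain ⟨I, hI, hIK⟩ := hsel a ha K hKa
      have hIG : r I G := (h𝒢 a ha I hI).resolve_left fun haI => haK (hIK haI)
      refine ⟨I, Finset.mem_insert_of_mem ?_, hIK⟩
      exact Finset.mem_biUnion.mpr ⟨a, ha, Finset.mem_filter.mpr ⟨hI, hIG⟩⟩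
  · simp only [Finset.mem_insert, Finset.mem_biUnion, Finset.mem_filter]
    rintro I (rfl | ⟨a, -, -, hIG⟩)
    · exact hHG
    · exact hIG

end Semicut

/-- **For divisible upper relations, semicut is equivalent to cut-transitivity.** -/
theorem semicut_iff_cutTransitive {S : Type*} (r : Finset S → Finset S → Prop)
    (hu : IsUpperRel r) (hd : Divisible r) :
    Semicut r ↔ CutTransitive r := by
  refine ⟨fun hsc => hsc.cutTransitive hu, fun hct F G H hHG hprem => hct F G ?_⟩
  exact cutComp_of_rel_of_forall_cutComp_mem_or hHG fun a ha =>
    cutComp_mem_or_of_rel_insert hu hd hct (hprem a ha)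
end

section
/- Let ⊢ be any relation on 𝖥S and define ⊩ on 𝖥S by: F ⊩ G iff every H ∈ 𝖥S with H ⊢ {f} for all f ∈ F satisfies H ⊢ G. Then ⊩ is lower, 1-reflexive, and satisfies ⊢_{1∃} • ⊩ ⊆ ⊢. Moreover: (1) if ⊢ is upper then so is ⊩; (2) if ⊢ is lower and 1-reflexive then ⊩ ⊆ ⊢; (3) if ⊢ is cut-transitive then ⊢ ⊆ ⊩; (4) if ⊢ is a strong idempotent then ⊩ is a Scott relation (a 1-reflexive monotone cut relation) satisfying ⊢ • ⊩ = ⊢. -/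
open scoped Classical

/-! Apart from the last item, every claim unfolds directly from the definition of `⊩`.
For a strong idempotent `⊢`, divisibility and a half-associativity of cut-composition give
`⊢ • ⊩ ⊆ (⊢ • ⊢₁∃) • ⊩ ⊆ ⊢ • (⊢₁∃ • ⊩) ⊆ ⊢ • ⊢ ⊆ ⊢`, where `⊢₁∃ • ⊩ ⊆ ⊢` holds for any `⊢`;
the cut rule for `⊩` is then reduced to this inclusion. -/

open Finset

section CutComp

variable {A B C D : Type*}

theorem cutComp_mono {r r' : Finset A → Finset B → Prop} {s s' : Finset B → Finset C → Prop}
    (hr : r ≤ r') (hs : s ≤ s') : CutComp r s ≤ CutComp r' s' := by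
  rintro F G ⟨ℱ, 𝒢, hℱ, hsel, h𝒢⟩
  exact ⟨ℱ, 𝒢, fun H hH => hr F H (hℱ H hH), hsel, fun I hI => hs I G (h𝒢 I hI)⟩

theorem cutComp_of_forall_singleton {r : Finset A → Finset B → Prop}
    {s : Finset B → Finset C → Prop} {F : Finset A} {I : Finset B} {G : Finset C}
    (hI : ∀ i ∈ I, r F {i}) (hs : s I G) : CutComp r s F G := by
  refine ⟨I.image singleton, {I}, ?_, ?_, ?_⟩
  · simpa using hI
  · refine fun K hK => ⟨I, mem_singleton_self I, fun i hi => ?_⟩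
    simpa using hK {i} (mem_image_of_mem _ hi)
  · simpa using hs

theorem CutComp.union {r : Finset A → Finset B → Prop} {t u s : Finset B → Finset C → Prop}
    {F : Finset A} {G₁ G₂ G : Finset C} (h₁ : CutComp r t F G₁) (h₂ : CutComp r u F G₂)
    (hs : ∀ I J, t I G₁ → u J G₂ → s (I ∪ J) G) : CutComp r s F G := by
  obtain ⟨ℱ₁, 𝒢₁, hℱ₁, hsel₁, h𝒢₁⟩ := h₁
  obtain ⟨ℱ₂, 𝒢₂, hℱ₂, hsel₂, h𝒢₂⟩ := h₂
  refine ⟨ℱ₁ ∪ ℱ₂, image₂ (· ∪ ·) 𝒢₁ 𝒢₂, ?_, ?_, ?_⟩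
  · intro H hH
    rcases mem_union.1 hH with hH | hH
    exacts [hℱ₁ H hH, hℱ₂ H hH]
  · intro K hK
    obtain ⟨I, hI, hIK⟩ := hsel₁ K fun H hH => hK H (mem_union_left _ hH)
    obtain ⟨J, hJ, hJK⟩ := hsel₂ K fun H hH => hK H (mem_union_right _ hH)
    exact ⟨I ∪ J, mem_image₂_of_mem hI hJ, union_subset hIK hJK⟩
  · intro IJ hIJ
    obtain ⟨I, hI, J, hJ, rfl⟩ := mem_image₂.1 hIJ
    exact hs I J (h𝒢₁ I hI) (h𝒢₂ J hJ)

/-- The new blocks are the sets `V` containing a block of each decomposition `F (r • t) H`,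
`H ∈ ℱ`; lowerness of `t` then gives `V t H` for every `H ∈ ℱ`. -/
theorem CutComp.assoc_le {r : Finset A → Finset B → Prop} {t : Finset B → Finset C → Prop}
    {s : Finset C → Finset D → Prop} (ht : IsLowerRel t) :
    CutComp (CutComp r t) s ≤ CutComp r (CutComp t s) := by
  rintro F G ⟨ℱ, 𝒢, hℱ, hsel, h𝒢⟩
  choose! ℱ' 𝒢' hℱ' hsel' h𝒢' using hℱ
  set U := ℱ.biUnion fun H => (𝒢' H).biUnion id
  refine ⟨ℱ.biUnion ℱ', U.powerset.filter fun V => ∀ H ∈ ℱ, ∃ J ∈ 𝒢' H, J ⊆ V, ?_, ?_, ?_⟩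
  · intro K hK
    obtain ⟨H, hH, hK⟩ := mem_biUnion.1 hK
    exact hℱ' H hH K hK
  · intro K hK
    refine ⟨U ∩ K, mem_filter.2 ⟨mem_powerset.2 inter_subset_left, fun H hH => ?_⟩,
      inter_subset_right⟩
    obtain ⟨J, hJ, hJK⟩ := hsel' H hH K fun L hL => hK L (mem_biUnion.2 ⟨H, hH, hL⟩)
    exact ⟨J, hJ, subset_inter (fun x hx => mem_biUnion.2 ⟨H, hH, mem_biUnion.2 ⟨J, hJ, hx⟩⟩)
      hJK⟩
  · intro V hV
    refine ⟨ℱ, 𝒢, fun H hH => ?_, hsel, h𝒢⟩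
    obtain ⟨J, hJ, hJV⟩ := (mem_filter.1 hV).2 H hH
    exact ht J H V (h𝒢' H hH J hJ) hJV

theorem cutComp_oneExists_iff {r : Finset A → Finset B → Prop} {s : Finset B → Finset C → Prop}
    {F : Finset A} {G : Finset C} :
    CutComp (OneExists r) s F G ↔ ∃ I, (∀ i ∈ I, r F {i}) ∧ s I G := by
  constructor
  · rintro ⟨ℱ, 𝒢, hℱ, hsel, h𝒢⟩
    choose g hgH hFg using fun H : ℱ => hℱ H.1 H.2
    obtain ⟨I, hI, hIg⟩ := hsel (ℱ.attach.image g) fun H hH =>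
      ⟨g ⟨H, hH⟩, hgH _, mem_image_of_mem _ (mem_attach _ _)⟩
    refine ⟨I, fun i hi => ?_, h𝒢 I hI⟩
    obtain ⟨H, -, rfl⟩ := mem_image.1 (hIg hi)
    exact hFg H
  · rintro ⟨I, hI, hs⟩
    exact cutComp_of_forall_singleton (fun i hi => ⟨i, mem_singleton_self i, hI i hi⟩) hs

theorem isLowerRel_oneExists {r : Finset A → Finset B → Prop} (hr : IsLowerRel r) :
    IsLowerRel (OneExists r) := by
  rintro F G E ⟨g, hg, hFg⟩ hFE
  exact ⟨g, hg, hr F {g} E hFg hFE⟩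

theorem oneExists_le {r : Finset A → Finset B → Prop} (hr : IsUpperRel r) : OneExists r ≤ r := by
  rintro F G ⟨g, hg, hFg⟩
  exact hr F {g} G hFg (singleton_subset_iff.2 hg)

end CutComp

section Vdash

variable {S : Type*} {r : Finset S → Finset S → Prop}

theorem CutTransitive.of_forall_singleton (hr : CutTransitive r) {H F G : Finset S}
    (hH : ∀ f ∈ F, r H {f}) (hFG : r F G) : r H G :=
  hr H G (cutComp_of_forall_singleton hH hFG)

variable (r) in
theorem isLowerRel_vdash : IsLowerRel (Vdash r) :=
  fun _ _ _ hFG hFE H hH => hFG H fun f hf => hH f (hFE hf)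

variable (r) in
theorem oneReflexive_vdash : OneReflexive (Vdash r) :=
  fun s _ hH => hH s (mem_singleton_self s)

theorem isUpperRel_vdash (hr : IsUpperRel r) : IsUpperRel (Vdash r) :=
  fun _ G G' hFG hGG' H hH => hr H G G' (hFG H hH) hGG'

theorem vdash_le (hl : IsLowerRel r) (h1 : OneReflexive r) : Vdash r ≤ r :=
  fun F _ hFG => hFG F fun f hf => hl {f} {f} F (h1 f) (singleton_subset_iff.2 hf)

theorem le_vdash (hr : CutTransitive r) : r ≤ Vdash r :=
  fun _ _ hFG _ hH => hr.of_forall_singleton hH hFG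

theorem cutComp_oneExists_vdash_le : CutComp (OneExists r) (Vdash r) ≤ r := by
  intro F G h
  obtain ⟨I, hFI, hIG⟩ := cutComp_oneExists_iff.1 h
  exact hIG F hFI

theorem vdash_union_of_vdash_singleton {X F G : Finset S} {g : S} (hX : Vdash r X {g})
    (hF : Vdash r (insert g F) G) : Vdash r (X ∪ F) G := by
  intro H hH
  refine hF H fun f hf => ?_
  rcases mem_insert.1 hf with rfl | hf
  · exact hX H fun x hx => hH x (mem_union_left _ hx)
  · exact hH f (mem_union_right _ hf)

theorem vdash_insert_of_mem (hr : IsUpperRel r) {F G : Finset S} {g : S} (hg : g ∈ G) :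
    Vdash r (insert g F) G :=
  fun H hH => hr H {g} G (hH g (mem_insert_self g F)) (singleton_subset_iff.2 hg)

theorem cutComp_vdash_le (hl : IsLowerRel r) (hct : CutTransitive r) (hdiv : Divisible r) :
    CutComp r (Vdash r) ≤ r :=
  calc CutComp r (Vdash r)
      ≤ CutComp (CutComp r (OneExists r)) (Vdash r) := cutComp_mono hdiv le_rfl
    _ ≤ CutComp r (CutComp (OneExists r) (Vdash r)) := CutComp.assoc_le (isLowerRel_oneExists hl)
    _ ≤ CutComp r r := cutComp_mono le_rfl cutComp_oneExists_vdash_le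
    _ ≤ r := hct

theorem cutComp_vdash_eq (hu : IsUpperRel r) (hl : IsLowerRel r) (hct : CutTransitive r)
    (hdiv : Divisible r) : CutComp r (Vdash r) = r :=
  le_antisymm (cutComp_vdash_le hl hct hdiv)
    fun F G hFG => cutComp_mono le_rfl ((oneExists_le hu).trans (le_vdash hct)) F G (hdiv F G hFG)

/-- To cut `s` from `H ⊢ insert s G`, divide it into blocks `I` with `I ⊢ {g}`,
`g ∈ insert s G`, and add the singletons of `F`: each `I ∪ F` then forces `G`,
through `insert s F ⊩ G` when `g = s`. -/
theorem cutRel_vdash (hu : IsUpperRel r) (hl : IsLowerRel r) (hct : CutTransitive r)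
    (hdiv : Divisible r) : CutRel (Vdash r) := by
  intro s F G hsF hsG H hH
  have hF : CutComp r (fun J _ => J = F) H G := cutComp_of_forall_singleton hH rfl
  refine cutComp_vdash_le hl hct hdiv H G <| (hdiv H _ (hsG H hH)).union hF ?_
  rintro I J ⟨g, hg, hIg⟩ rfl
  refine vdash_union_of_vdash_singleton (le_vdash hct I {g} hIg) ?_
  rcases mem_insert.1 hg with rfl | hgG
  exacts [hsF, vdash_insert_of_mem hu hgG]

end Vdash

/-- **Properties of the induced relation `⊩`.** -/
theorem vdash_properties {S : Type*} (r : Finset S → Finset S → Prop) :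
    IsLowerRel (Vdash r) ∧ OneReflexive (Vdash r) ∧
    (∀ F G : Finset S, CutComp (OneExists r) (Vdash r) F G → r F G) ∧
    (IsUpperRel r → IsUpperRel (Vdash r)) ∧
    (IsLowerRel r → OneReflexive r → ∀ F G : Finset S, Vdash r F G → r F G) ∧
    (CutTransitive r → ∀ F G : Finset S, r F G → Vdash r F G) ∧
    (StrongIdempotent r →
      (OneReflexive (Vdash r) ∧ IsUpperRel (Vdash r) ∧ IsLowerRel (Vdash r) ∧
        CutRel (Vdash r)) ∧
      ∀ F G : Finset S, CutComp r (Vdash r) F G ↔ r F G) := by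
  refine ⟨isLowerRel_vdash r, oneReflexive_vdash r, cutComp_oneExists_vdash_le,
    isUpperRel_vdash, vdash_le, le_vdash, ?_⟩
  rintro ⟨hu, hl, hct, hdiv⟩
  refine ⟨⟨oneReflexive_vdash r, isUpperRel_vdash hu, isLowerRel_vdash r,
    cutRel_vdash hu hl hct hdiv⟩, fun F G => ?_⟩
  rw [cutComp_vdash_eq hu hl hct hdiv]
end

section
/- A relation ⊢ on 𝖥S is a cover relation if and only if ⊢ is a divisible entailment auxiliary to ⊩, i.e. iff ⊢ is an entailment satisfying ⊩ • ⊢ ⊆ ⊢ ⊆ ⊢ • ⊢_{1∃}. -/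
open scoped Classical

/-! Both directions pass through self-auxiliarity `AuxiliaryTo r r`, a cut rule for a whole finite
set at once. An entailment has it by cutting one element at a time; a cut-transitive relation
satisfies `⊢ ⊆ ⊩`, so it inherits it from auxiliarity to `⊩`. Conversely, self-auxiliarity lets
one cut along every member of a finite family `ℱ` with `F ⊢ H` for `H ∈ ℱ`, reducing `F ⊢ G` to
`F ∪ K ⊢ G` for the selections `K` of `ℱ`; this yields cut-transitivity, and, applied to the family
given by divisibility of `F ⊢ G ∪ {s}`, the cut rule. -/

section CutComposition

variable {S : Type*} {r : Finset S → Finset S → Prop}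

lemma IsSelection.insert {ℋ : Finset (Finset S)} {K A : Finset S} {a : S}
    (hK : IsSelection ℋ K) (ha : a ∈ A) : IsSelection (insert A ℋ) (insert a K) := by
  intro I hI
  rcases Finset.mem_insert.mp hI with rfl | hIℋ
  · exact ⟨a, ha, Finset.mem_insert_self a K⟩
  · obtain ⟨x, hxI, hxK⟩ := hK I hIℋ
    exact ⟨x, hxI, Finset.mem_insert_of_mem hxK⟩

lemma vdash_of_cutTransitive (hct : CutTransitive r) {F H : Finset S} (hFH : r F H) :
    Vdash r F H := by
  intro E hE
  refine hct E H ⟨F.image ({·}), {F}, ?_, ?_, ?_⟩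
  · simpa using hE
  · refine fun K hK => ⟨F, Finset.mem_singleton_self F, fun f hf => ?_⟩
    simpa using hK {f} (Finset.mem_image_of_mem _ hf)
  · simpa using hFH

lemma auxiliaryTo_self_of_cutTransitive (hct : CutTransitive r)
    (haux : AuxiliaryTo r (Vdash r)) : AuxiliaryTo r r :=
  fun F H G hH hFH => haux F H G hH (vdash_of_cutTransitive hct hFH)

lemma auxiliaryTo_self_of_cutRel (hup : IsUpperRel r) (hcut : CutRel r) : AuxiliaryTo r r := by
  suffices key : ∀ H F G : Finset S, r F (H ∪ G) → (∀ h ∈ H, r (insert h F) G) → r F G from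
    fun F H G hH hFH => key H F G (hup F H _ hFH Finset.subset_union_left) hH
  intro H
  induction H using Finset.induction_on with
  | empty => simp
  | @insert a H _ ih =>
    intro F G hFG hH
    refine ih F G ?_ fun h hh => hH h (Finset.mem_insert_of_mem hh)
    refine hcut a F (H ∪ G) ?_ (by rwa [← Finset.insert_union])
    exact hup _ G _ (hH a (Finset.mem_insert_self a H)) Finset.subset_union_right

lemma rel_of_forall_selection (hlow : IsLowerRel r) (haux : AuxiliaryTo r r)
    (ℋ : Finset (Finset S)) {F G : Finset S} (hℋ : ∀ H ∈ ℋ, r F H)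
    (hsel : ∀ K, IsSelection ℋ K → r (F ∪ K) G) : r F G := by
  induction ℋ using Finset.induction_on generalizing F with
  | empty => simpa using hsel ∅ (by simp [IsSelection])
  | @insert A ℋ _ ih =>
    refine haux F A G (fun a ha => ?_) (hℋ A (Finset.mem_insert_self A ℋ))
    refine ih (fun H hH => hlow F H _ (hℋ H (Finset.mem_insert_of_mem hH))
      (Finset.subset_insert a F)) fun K hK => ?_
    simpa [Finset.union_insert, Finset.insert_union] using hsel _ (hK.insert ha)

lemma cutTransitive_of_auxiliaryTo_self (hlow : IsLowerRel r) (haux : AuxiliaryTo r r) :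
    CutTransitive r := by
  rintro F G ⟨ℱ, 𝒢, hℱ, hsel, h𝒢⟩
  refine rel_of_forall_selection hlow haux ℱ hℱ fun K hK => ?_
  obtain ⟨I, hI, hIK⟩ := hsel K hK
  exact hlow I G _ (h𝒢 I hI) (hIK.trans Finset.subset_union_right)

lemma cutRel_of_divisible (hup : IsUpperRel r) (hlow : IsLowerRel r) (hdiv : Divisible r)
    (haux : AuxiliaryTo r r) : CutRel r := by
  intro s F G hsF hsG
  obtain ⟨ℱ, 𝒢, hℱ, hsel, h𝒢⟩ := hdiv F (insert s G) hsG
  refine rel_of_forall_selection hlow haux ℱ hℱ fun K hK => ?_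
  obtain ⟨I, hI, hIK⟩ := hsel K hK
  obtain ⟨x, hx, hIx⟩ := h𝒢 I hI
  have hFKx : r (F ∪ K) {x} := hlow I {x} _ hIx (hIK.trans Finset.subset_union_right)
  rcases Finset.mem_insert.mp hx with rfl | hxG
  · refine haux (F ∪ K) {x} G (fun y hy => ?_) hFKx
    rw [Finset.mem_singleton.mp hy]
    exact hlow _ G _ hsF (Finset.insert_subset_insert x Finset.subset_union_left)
  · exact hup _ {x} G hFKx (Finset.singleton_subset_iff.mpr hxG)

end CutComposition

/-- **Cover relations are exactly the divisible entailments auxiliary to `⊩`.** -/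
theorem cover_iff_divisible_entailment {S : Type*} (r : Finset S → Finset S → Prop) :
    CoverRelation r ↔ (Entailment r ∧ Divisible r ∧ AuxiliaryTo r (Vdash r)) := by
  constructor
  · rintro ⟨⟨hup, hlow, hct, hdiv⟩, haux⟩
    have hself := auxiliaryTo_self_of_cutTransitive hct haux
    exact ⟨⟨hup, hlow, cutRel_of_divisible hup hlow hdiv hself⟩, hdiv, haux⟩
  · rintro ⟨⟨hup, hlow, hcut⟩, hdiv, haux⟩
    have hself := auxiliaryTo_self_of_cutRel hup hcut
    exact ⟨⟨hup, hlow, cutTransitive_of_auxiliaryTo_self hlow hself, hdiv⟩, haux⟩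
end

section
/- Let < be a relation on a set S and ⊨ a relation on 𝖥S. Define F ◁ G iff for every f ∈ F there is g ∈ G with f < g, and define ⊢ on 𝖥S by F ⊢ G iff there is H ∈ 𝖥S with F ⊨ H and H ◁ G. Then: (1) ⊢ is an entailment if ⊨ is an entailment and, for all s ∈ S and F, G ∈ 𝖥S, F ⊨ G implies F ⊨ (G \ {g : g < s}) ∪ {s}; (2) ⊢ is a strong idempotent if, in addition, ⊨ is 1-reflexive and whenever q < r there exists F ∈ 𝖥S with {q} ⊢ F and f < r for all f ∈ F; (3) ⊢ is a cover relation if, moreover, for all F, G ∈ 𝖥S: ({t} ⊨ G for every t ∈ S with t < f for all f ∈ F) implies F ⊨ G. -/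
open scoped Classical

/-!
The Scott condition lets one add any `s` to the right of `F ⊨ G` after discarding the members
of `G` below `s`; doing this for every element of `H` turns `F ⊨ K` with `K ◁ H` into `F ⊨ H`,
so `⊢ ⊆ ⊨`. Cut for `⊢` is then cut for `⊨` applied after the Scott condition has removed
from the right the elements below the cut formula. Cut-transitivity reduces to the multi-cut
rule of the entailment `⊨`, divisibility to interpolating each `f < g` through `{f} ⊢ F ◁ {g}`.
For auxiliarity, `{s} ⊢ {f}` whenever `s < f`, so the hypothesis of (3) turns `F ⊩ H` into
`F ⊨ H`, and a cut along `H` finishes.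
-/

section ScottCover

variable {S : Type*} {lt : S → S → Prop} {v : Finset S → Finset S → Prop}

/-- `F ◁ G`. -/
def Below (lt : S → S → Prop) (F G : Finset S) : Prop :=
  ∀ f ∈ F, ∃ g ∈ G, lt f g

/-- The relation `⊢`, with `r` in the role of `⊨`. -/
def ScottRel {A : Type*} (lt : S → S → Prop) (r : Finset A → Finset S → Prop)
    (F : Finset A) (G : Finset S) : Prop :=
  ∃ H, r F H ∧ Below lt H G

def ScottCompatible (lt : S → S → Prop) (v : Finset S → Finset S → Prop) : Prop :=
  ∀ s F G, v F G → v F (insert s (G.filter fun g => ¬ lt g s))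

theorem Below.mono_right {F G G' : Finset S} (h : Below lt F G) (hG : G ⊆ G') :
    Below lt F G' := fun f hf =>
  let ⟨g, hg, hfg⟩ := h f hf
  ⟨g, hG hg, hfg⟩

theorem Below.union {F F' G : Finset S} (h : Below lt F G) (h' : Below lt F' G) :
    Below lt (F ∪ F') G := by
  intro f hf
  rcases Finset.mem_union.1 hf with hf | hf
  exacts [h f hf, h' f hf]

theorem Below.filter_not_lt_of_insert {F G : Finset S} {s : S} (h : Below lt F (insert s G)) :
    Below lt (F.filter fun f => ¬ lt f s) G := by
  intro f hf
  obtain ⟨hfF, hfs⟩ := Finset.mem_filter.1 hf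
  obtain ⟨g, hg, hfg⟩ := h f hfF
  rcases Finset.mem_insert.1 hg with rfl | hg
  exacts [absurd hfg hfs, ⟨g, hg, hfg⟩]

theorem Entailment.cut_finset (hv : Entailment v) {F G : Finset S} (H : Finset S)
    (hFH : v F (H ∪ G)) (hH : ∀ h ∈ H, v (insert h F) G) : v F G := by
  induction H using Finset.induction_on generalizing G with
  | empty => simpa using hFH
  | insert h H _ ih =>
    refine hv.2.2 h F G (hH h (Finset.mem_insert_self h H)) (ih ?_ fun h' hh' =>
      hv.1 _ _ _ (hH h' (Finset.mem_insert_of_mem hh')) (Finset.subset_insert h G))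
    rwa [Finset.union_insert, ← Finset.insert_union]

theorem Entailment.cut_selections (hv : Entailment v) {G : Finset S} (ℱ : Finset (Finset S))
    {F : Finset S} (hℱ : ∀ H ∈ ℱ, v F H) (hsel : ∀ K, IsSelection ℱ K → v (K ∪ F) G) :
    v F G := by
  induction ℱ using Finset.induction_on generalizing F with
  | empty => simpa using hsel ∅ (by simp [IsSelection])
  | insert H₀ ℱ _ ih =>
    refine hv.cut_finset H₀ (hv.1 _ _ _ (hℱ H₀ (Finset.mem_insert_self _ _))
      Finset.subset_union_left) fun h hh => ih (fun H hH => hv.2.1 _ _ _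
        (hℱ H (Finset.mem_insert_of_mem hH)) (Finset.subset_insert h F)) fun K hK => ?_
    have hsel' : IsSelection (insert H₀ ℱ) (insert h K) := by
      intro I hI
      rcases Finset.mem_insert.1 hI with rfl | hI
      · exact ⟨h, hh, Finset.mem_insert_self h K⟩
      · obtain ⟨x, hxI, hxK⟩ := hK I hI
        exact ⟨x, hxI, Finset.mem_insert_of_mem hxK⟩
    simpa [Finset.union_insert, Finset.insert_union] using hsel _ hsel'

theorem Entailment.cutTransitive (hv : Entailment v) : CutTransitive v := by
  rintro F G ⟨ℱ, 𝒢, hℱ, hsel, h𝒢⟩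
  refine hv.cut_selections ℱ hℱ fun K hK => ?_
  obtain ⟨I, hI, hIK⟩ := hsel K hK
  exact hv.2.1 _ _ _ (h𝒢 I hI) (hIK.trans Finset.subset_union_left)

theorem IsUpperRel.exists_common_of_scottRel {A ι : Type*} {r : Finset A → Finset S → Prop}
    (hr : IsUpperRel r) {G : Finset S} (e : ι → Finset A) (s : Finset ι)
    (h : ∀ i ∈ s, ScottRel lt r (e i) G) : ∃ X, (∀ i ∈ s, r (e i) X) ∧ Below lt X G := by
  induction s using Finset.induction_on with
  | empty => exact ⟨∅, by simp, by simp [Below]⟩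
  | insert i s _ ih =>
    obtain ⟨X, hX, hXG⟩ := ih fun j hj => h j (Finset.mem_insert_of_mem hj)
    obtain ⟨Y, hY, hYG⟩ := h i (Finset.mem_insert_self i s)
    refine ⟨X ∪ Y, Finset.forall_mem_insert _ _ _ |>.2 ⟨?_, fun j hj => ?_⟩, hXG.union hYG⟩
    exacts [hr _ _ _ hY Finset.subset_union_right, hr _ _ _ (hX j hj) Finset.subset_union_left]

theorem scottRel_of_forall_insert (hv : Entailment v) {F G H : Finset S} (hFH : v F H)
    (hH : ∀ h ∈ H, ScottRel lt v (insert h F) G) : ScottRel lt v F G := by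
  obtain ⟨M, hM, hMG⟩ := hv.1.exists_common_of_scottRel (fun h => insert h F) H hH
  exact ⟨M, hv.cut_finset H (hv.1 _ _ _ hFH Finset.subset_union_left) hM, hMG⟩

theorem scottRel_singleton_of_lt (hrefl : OneReflexive v) {x g : S} (h : lt x g) :
    ScottRel lt v {x} {g} :=
  ⟨{x}, hrefl x, by simpa [Below] using h⟩

theorem ScottCompatible.union_filter (hsc : ScottCompatible lt v) (hu : IsUpperRel v)
    {F K : Finset S} (hK : v F K) (H : Finset S) :
    v F (H ∪ K.filter fun c => ∀ g ∈ H, ¬ lt c g) := by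
  induction H using Finset.induction_on with
  | empty => simpa using hK
  | insert g H _ ih =>
    refine hu _ _ _ (hsc g F _ ih) fun x hx => ?_
    simp only [Finset.mem_insert, Finset.mem_filter, Finset.mem_union, forall_eq_or_imp]
      at hx ⊢
    tauto

theorem ScottCompatible.of_below (hsc : ScottCompatible lt v) (hu : IsUpperRel v)
    {F K H : Finset S} (hK : v F K) (hKH : Below lt K H) : v F H := by
  have hnone : K.filter (fun c => ∀ g ∈ H, ¬ lt c g) = ∅ :=
    Finset.filter_false_of_mem fun c hc hc' =>
      let ⟨g, hg, hcg⟩ := hKH c hc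
      hc' g hg hcg
  simpa [hnone] using hsc.union_filter hu hK H

theorem ScottCompatible.of_scottRel (hsc : ScottCompatible lt v) (hu : IsUpperRel v)
    {F G : Finset S} (h : ScottRel lt v F G) : v F G :=
  let ⟨_, hK, hKG⟩ := h
  hsc.of_below hu hK hKG

theorem scottRel_isUpperRel : IsUpperRel (ScottRel lt v) := by
  rintro F G G' ⟨H, hFH, hHG⟩ hGG'
  exact ⟨H, hFH, hHG.mono_right hGG'⟩

theorem scottRel_isLowerRel (hl : IsLowerRel v) : IsLowerRel (ScottRel lt v) := by
  rintro F G E ⟨H, hFH, hHG⟩ hFE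
  exact ⟨H, hl _ _ _ hFH hFE, hHG⟩

theorem scottRel_cutRel (hv : Entailment v) (hsc : ScottCompatible lt v) :
    CutRel (ScottRel lt v) := by
  rintro s F G ⟨H₁, h₁, hH₁G⟩ ⟨H₂, h₂, hH₂G⟩
  refine ⟨H₁ ∪ H₂.filter fun f => ¬ lt f s, hv.2.2 s F _ ?_ ?_,
    hH₁G.union hH₂G.filter_not_lt_of_insert⟩
  · exact hv.1 _ _ _ h₁ Finset.subset_union_left
  · exact hv.1 _ _ _ (hsc s F H₂ h₂) (Finset.insert_subset_insert s Finset.subset_union_right)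

theorem scottRel_entailment (hv : Entailment v) (hsc : ScottCompatible lt v) :
    Entailment (ScottRel lt v) :=
  ⟨scottRel_isUpperRel, scottRel_isLowerRel hv.2.1, scottRel_cutRel hv hsc⟩

theorem scottRel_cutTransitive (hv : Entailment v) (hsc : ScottCompatible lt v) :
    CutTransitive (ScottRel lt v) := by
  rintro F G ⟨ℱ, 𝒢, hℱ, hsel, h𝒢⟩
  obtain ⟨M, hM, hMG⟩ := hv.1.exists_common_of_scottRel id 𝒢 h𝒢
  exact ⟨M, hv.cutTransitive F M
    ⟨ℱ, 𝒢, fun H hH => hsc.of_scottRel hv.1 (hℱ H hH), hsel, hM⟩, hMG⟩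

theorem scottRel_divisible (hv : Entailment v) (hrefl : OneReflexive v)
    (hint : ∀ q t : S, lt q t → ∃ F : Finset S, ScottRel lt v {q} F ∧ ∀ f ∈ F, lt f t) :
    Divisible (ScottRel lt v) := by
  rintro F G ⟨H, hFH, hHG⟩
  have hsplit : ∀ f ∈ H, ScottRel lt (ScottRel lt v) {f} G := by
    intro f hf
    obtain ⟨g, hg, hfg⟩ := hHG f hf
    obtain ⟨X, hfX, hXg⟩ := hint f g hfg
    exact ⟨X, hfX, fun x hx => ⟨g, hg, hXg x hx⟩⟩
  obtain ⟨X, hX, hXG⟩ :=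
    scottRel_isUpperRel.exists_common_of_scottRel singleton H hsplit
  have hFX : ScottRel lt v F X := scottRel_of_forall_insert hv hFH fun f hf =>
    scottRel_isLowerRel hv.2.1 _ _ _ (hX f hf) (Finset.singleton_subset_iff.2
      (Finset.mem_insert_self f F))
  refine ⟨{X}, X.image singleton, by simpa using hFX, fun K hK => ?_, ?_⟩
  · obtain ⟨x, hx, hxK⟩ := hK X (Finset.mem_singleton_self X)
    exact ⟨{x}, Finset.mem_image_of_mem _ hx, Finset.singleton_subset_iff.2 hxK⟩
  · simp only [Finset.forall_mem_image]
    intro x hx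
    obtain ⟨g, hg, hxg⟩ := hXG x hx
    exact ⟨g, hg, scottRel_singleton_of_lt hrefl hxg⟩

theorem scottRel_strongIdempotent (hv : Entailment v) (hsc : ScottCompatible lt v)
    (hrefl : OneReflexive v)
    (hint : ∀ q t : S, lt q t → ∃ F : Finset S, ScottRel lt v {q} F ∧ ∀ f ∈ F, lt f t) :
    StrongIdempotent (ScottRel lt v) :=
  ⟨scottRel_isUpperRel, scottRel_isLowerRel hv.2.1, scottRel_cutTransitive hv hsc,
    scottRel_divisible hv hrefl hint⟩

theorem scottRel_auxiliaryTo (hv : Entailment v) (hsc : ScottCompatible lt v)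
    (hrefl : OneReflexive v)
    (hE : ∀ F G : Finset S, (∀ s : S, (∀ f ∈ F, lt s f) → v {s} G) → v F G) :
    AuxiliaryTo (ScottRel lt v) (Vdash (ScottRel lt v)) := by
  intro F H G hH hFH
  have hvFH : v F H := hE F H fun s hs => hsc.of_scottRel hv.1
    (hFH {s} fun f hf => scottRel_singleton_of_lt hrefl (hs f hf))
  exact scottRel_of_forall_insert hv hvFH hH

end ScottCover

/-- **Cover relations from Scott relations and compatible idempotent relations.** -/
theorem scott_cover {S : Type*} (lt : S → S → Prop) (v : Finset S → Finset S → Prop) :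
    let tri : Finset S → Finset S → Prop := fun F G => ∀ f ∈ F, ∃ g ∈ G, lt f g
    let rr : Finset S → Finset S → Prop := fun F G => ∃ H : Finset S, v F H ∧ tri H G
    Entailment v →
    (∀ (s : S) (F G G' : Finset S), (∀ g, g ∈ G' ↔ (g ∈ G ∧ ¬ lt g s)) → v F G →
      v F (insert s G')) →
    Entailment rr ∧
    (OneReflexive v →
      (∀ q t : S, lt q t → ∃ F : Finset S, rr {q} F ∧ ∀ f ∈ F, lt f t) →
      StrongIdempotent rr ∧
      ((∀ F G : Finset S, (∀ s : S, (∀ f ∈ F, lt s f) → v {s} G) → v F G) →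
        CoverRelation rr)) := by
  intro tri rr hv hsc
  have hscott : ScottCompatible lt v := fun s F G h =>
    hsc s F G _ (fun _ => Finset.mem_filter) h
  refine ⟨scottRel_entailment hv hscott, fun hrefl hint => ?_⟩
  have hidem : StrongIdempotent rr := scottRel_strongIdempotent hv hscott hrefl hint
  exact ⟨hidem, fun hE => ⟨hidem, scottRel_auxiliaryTo hv hscott hrefl hE⟩⟩
end

section
/- Let ⊢ ⊆ R × S be a relation between the elements of sets R and S, let r ∈ R, and let ℱ be a finite family of finite subsets of S. Then the following are equivalent: (i) for every G ∈ ℱ_⋔ there is g ∈ G with r ⊢ g; (ii) there is F ∈ ℱ with r ⊢ f for every f ∈ F. -/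
open scoped Classical

theorem exists_isSelection_forall_of_forall_exists {S : Type*} {ℱ : Finset (Finset S)}
    {P : S → Prop} (h : ∀ F ∈ ℱ, ∃ x ∈ F, P x) :
    ∃ G : Finset S, IsSelection ℱ G ∧ ∀ g ∈ G, P g := by
  refine ⟨ℱ.biUnion (·.filter P), fun F hF => ?_, fun g hg => ?_⟩
  · obtain ⟨x, hxF, hx⟩ := h F hF
    exact ⟨x, hxF, Finset.mem_biUnion.2 ⟨F, hF, Finset.mem_filter.2 ⟨hxF, hx⟩⟩⟩
  · obtain ⟨F, -, hgF⟩ := Finset.mem_biUnion.1 hg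
    exact (Finset.mem_filter.1 hgF).2

/-- **Selections of a finite family and finite choice.** -/
theorem selection_iff_member {R S : Type*} (r : R → S → Prop) (p : R)
    (ℱ : Finset (Finset S)) :
    (∀ G : Finset S, IsSelection ℱ G → ∃ g ∈ G, r p g) ↔
      ∃ F ∈ ℱ, ∀ f ∈ F, r p f := by
  constructor
  · intro h
    by_contra! hnone
    obtain ⟨G, hG, hGnot⟩ := exists_isSelection_forall_of_forall_exists hnone
    obtain ⟨g, hg, hrg⟩ := h G hG
    exact hGnot g hg hrg
  · rintro ⟨F, hF, hrF⟩ G hG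
    obtain ⟨x, hxF, hxG⟩ := hG F hF
    exact ⟨x, hxG, hrF x hxF⟩
end

section
/- Let X be a topological space and S a family of open subsets of X. Define ⊢ on 𝖥S by F ⊢ G iff ⋂F ⋐ ⋃G (with the conventions ⋂∅ = X and ⋃∅ = ∅). Then ⊢ is an entailment. If moreover S is ∩-round, then ⊢ is a cover relation. -/
open scoped Classical

/-! Since the members of `S` are open, `F ⊢ G` forces `⋂F ⊆ ⋃G`, and `⋐` is stable under finite
unions on the left. Cut-transitivity then reduces to the combinatorial fact that a point lying
in `⋃H` for every `H ∈ ℱ` lies in `⋂I` for some `I ∈ 𝒢`. Applying `∩`-roundness to each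
`f ∈ F` gives every `x ∈ ⋂F` a finite `E ⊆ S` with `x ∈ ⋂E ⋐ f` for all `f ∈ F`. For
divisibility, every `x ∈ ⋃G` lies in such a `⋂E` built for some `I` with `x ∈ ⋂I ⋐ g ∈ G`;
finitely many of these open sets cover `⋂F`, their `I` form `𝒢`, and `ℱ` is the family of
selections of `𝒢`. -/

namespace CompactlyContained

variable {X : Type*} [TopologicalSpace X] {p p' q q' : Set X}

theorem mono_left (h : CompactlyContained p q) (hp : p' ⊆ p) : CompactlyContained p' q :=
  fun 𝒰 ho hc => (h 𝒰 ho hc).imp fun _ h𝒱 => ⟨h𝒱.1, hp.trans h𝒱.2⟩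

theorem mono_right (h : CompactlyContained p q) (hq : q ⊆ q') : CompactlyContained p q' :=
  fun 𝒰 ho hc => h 𝒰 ho (hq.trans hc)

theorem subset (h : CompactlyContained p q) (hq : IsOpen q) : p ⊆ q := by
  obtain ⟨𝒱, h𝒱, hp⟩ := h {q} (by simpa using hq) (by simp)
  exact hp.trans (Set.sUnion_subset fun v hv => (Set.mem_singleton_iff.1 (h𝒱 hv)).le)

theorem of_subset_biUnion {ι : Type*} {t : Finset ι} {f : ι → Set X}
    (hp : p ⊆ ⋃ i ∈ t, f i) (h : ∀ i ∈ t, CompactlyContained (f i) q) :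
    CompactlyContained p q := by
  intro 𝒰 ho hc
  choose! 𝒱 h𝒱 hf using fun i hi => h i hi 𝒰 ho hc
  refine ⟨t.biUnion 𝒱, by simpa using h𝒱, hp.trans (Set.iUnion₂_subset fun i hi => ?_)⟩
  exact (hf i hi).trans
    (Set.sUnion_mono (Finset.coe_subset.2 (Finset.subset_biUnion_of_mem 𝒱 hi)))

theorem exists_finset_subset_biUnion {ι : Type*} {s : Set ι} {U : ι → Set X}
    (h : CompactlyContained p q) (hU : ∀ i ∈ s, IsOpen (U i)) (hq : q ⊆ ⋃ i ∈ s, U i) :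
    ∃ t : Finset ι, ↑t ⊆ s ∧ p ⊆ ⋃ i ∈ t, U i := by
  obtain ⟨𝒱, h𝒱, hp⟩ := h (U '' s) (by simpa using hU) (by simpa [Set.sUnion_image] using hq)
  obtain ⟨t, hts, rfl⟩ := Finset.subset_set_image_iff.1 h𝒱
  exact ⟨t, hts, by simpa [Set.sUnion_image] using hp⟩

theorem of_inter_of_union {s : Set X} (hs : IsOpen s) (h₁ : CompactlyContained (s ∩ p) q)
    (h₂ : CompactlyContained p (s ∪ q)) : CompactlyContained p q := by
  intro 𝒰 ho hc
  obtain ⟨𝒲, h𝒲, hs𝒲⟩ := h₁ 𝒰 ho hc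
  obtain ⟨𝒱, h𝒱, hp𝒱⟩ := h₂ (insert s 𝒰) (by simpa [hs] using ho)
    (Set.union_subset_union_right s hc |>.trans (by simp))
  refine ⟨𝒱.erase s ∪ 𝒲, ?_, fun x hx => ?_⟩
  · simp only [Finset.coe_union, Finset.coe_erase, Set.union_subset_iff]
    exact ⟨fun u hu => (h𝒱 hu.1).resolve_left hu.2, h𝒲⟩
  · obtain ⟨v, hv, hxv⟩ := hp𝒱 hx
    by_cases hvs : v = s
    · subst hvs
      obtain ⟨w, hw, hxw⟩ := hs𝒲 ⟨hxv, hx⟩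
      exact ⟨w, by simp [hw], hxw⟩
    · exact ⟨v, by simp [hvs, hv], hxv⟩

end CompactlyContained

section Selections

variable {S : Type*}

noncomputable def selections (𝒢 : Finset (Finset S)) : Finset (Finset S) :=
  ((𝒢.sup id).powerset).filter (IsSelection 𝒢)

theorem isSelection_of_mem_selections {𝒢 : Finset (Finset S)} {H : Finset S}
    (hH : H ∈ selections 𝒢) : IsSelection 𝒢 H :=
  (Finset.mem_filter.1 hH).2

theorem exists_subset_of_isSelection_selections {𝒢 : Finset (Finset S)} {K : Finset S}
    (hK : IsSelection (selections 𝒢) K) : ∃ I ∈ 𝒢, I ⊆ K := by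
  by_contra! hnot
  choose t ht htK using fun I hI => Finset.not_subset.1 (hnot I hI)
  let H : Finset S := 𝒢.attach.image fun I => t I.1 I.2
  have hH : H ∈ selections 𝒢 := by
    refine Finset.mem_filter.2 ⟨Finset.mem_powerset.2 fun s hs => ?_, fun I hI => ?_⟩
    · obtain ⟨I, -, rfl⟩ := Finset.mem_image.1 hs
      exact Finset.mem_sup.2 ⟨I.1, I.2, ht I.1 I.2⟩
    · exact ⟨t I hI, ht I hI, Finset.mem_image.2 ⟨⟨I, hI⟩, Finset.mem_attach _ _, rfl⟩⟩
  obtain ⟨s, hsH, hsK⟩ := hK H hH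
  obtain ⟨I, -, rfl⟩ := Finset.mem_image.1 hsH
  exact htK I.1 I.2 hsK

theorem exists_forall_of_forall_exists_of_isSelection {ℱ 𝒢 : Finset (Finset S)}
    (h : ∀ K, IsSelection ℱ K → ∃ I ∈ 𝒢, I ⊆ K) {P : S → Prop}
    (hP : ∀ H ∈ ℱ, ∃ s ∈ H, P s) : ∃ I ∈ 𝒢, ∀ s ∈ I, P s := by
  obtain ⟨I, hI, hIK⟩ := h ((ℱ.sup id).filter P) fun H hH => by
    obtain ⟨s, hs, hPs⟩ := hP H hH
    exact ⟨s, hs, Finset.mem_filter.2 ⟨Finset.mem_sup.2 ⟨H, hH, hs⟩, hPs⟩⟩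
  exact ⟨I, hI, fun s hs => (Finset.mem_filter.1 (hIK hs)).2⟩

end Selections

namespace subCover

variable {X : Type*} [TopologicalSpace X] {S : Set (Set X)}

theorem singleton_iff {F : Finset S} {g : S} :
    subCover S F {g} ↔ CompactlyContained (⋂ p ∈ F, (p : Set X)) g := by
  rw [subCover, Finset.set_biUnion_singleton]

theorem subset (hS : ∀ p ∈ S, IsOpen p) {F G : Finset S} (h : subCover S F G) :
    ⋂ p ∈ F, (p : Set X) ⊆ ⋃ p ∈ G, (p : Set X) :=
  CompactlyContained.subset h (isOpen_biUnion fun p _ => hS p p.2)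

variable (S) in
theorem isUpperRel : IsUpperRel (subCover S) :=
  fun _ _ _ h hGH => h.mono_right (Set.biUnion_subset_biUnion_left hGH)

variable (S) in
theorem isLowerRel : IsLowerRel (subCover S) :=
  fun _ _ _ h hFE => h.mono_left (Set.biInter_subset_biInter_left hFE)

theorem cutRel (hS : ∀ p ∈ S, IsOpen p) : CutRel (subCover S) := by
  intro s F G h₁ h₂
  simp only [subCover, Finset.set_biInter_insert] at h₁
  simp only [subCover, Finset.set_biUnion_insert] at h₂
  exact CompactlyContained.of_inter_of_union (hS s s.2) h₁ h₂

theorem cutTransitive (hS : ∀ p ∈ S, IsOpen p) : CutTransitive (subCover S) := by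
  rintro F G ⟨ℱ, 𝒢, hℱ, hsel, h𝒢⟩
  refine CompactlyContained.of_subset_biUnion (fun x hx => ?_) h𝒢
  obtain ⟨I, hI, hxI⟩ := exists_forall_of_forall_exists_of_isSelection hsel
    (P := fun s => x ∈ (s : Set X)) fun H hH => by simpa using subset hS (hℱ H hH) hx
  exact Set.mem_biUnion hI (Set.mem_iInter₂.2 hxI)

theorem _root_.CapRound.exists_forall_subCover (hR : CapRound S) {F : Finset S} {x : X}
    (hx : x ∈ ⋂ p ∈ F, (p : Set X)) :
    ∃ E : Finset S, x ∈ ⋂ p ∈ E, (p : Set X) ∧ ∀ f ∈ F, subCover S E {f} := by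
  choose! E hxE hEf using fun (f : S) (hf : f ∈ F) => hR f f.2 x (Set.mem_iInter₂.1 hx f hf)
  refine ⟨F.biUnion E, ?_, fun f hf => singleton_iff.2 ((hEf f hf).mono_left ?_)⟩
  · refine Set.mem_iInter₂.2 fun p hp => ?_
    obtain ⟨f, hf, hpf⟩ := Finset.mem_biUnion.1 hp
    exact Set.mem_iInter₂.1 (hxE f hf) p hpf
  · exact Set.biInter_subset_biInter_left fun p hp => Finset.mem_biUnion.2 ⟨f, hf, hp⟩

theorem divisible (hS : ∀ p ∈ S, IsOpen p) (hR : CapRound S) : Divisible (subCover S) := by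
  intro F G h
  let W : Set (Finset S × Finset S) :=
    {EI | OneExists (subCover S) EI.2 G ∧ ∀ q ∈ EI.2, subCover S EI.1 {q}}
  have hcover : ⋃ g ∈ G, (g : Set X) ⊆ ⋃ EI ∈ W, ⋂ p ∈ EI.1, (p : Set X) := by
    simp only [Set.iUnion₂_subset_iff]
    intro g hg x hxg
    obtain ⟨I, hxI, hIg⟩ := hR g g.2 x hxg
    obtain ⟨E, hxE, hEI⟩ := hR.exists_forall_subCover hxI
    exact Set.mem_biUnion (x := (E, I)) ⟨⟨g, hg, singleton_iff.2 hIg⟩, hEI⟩ hxE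
  obtain ⟨t, htW, hFt⟩ := CompactlyContained.exists_finset_subset_biUnion h
    (fun EI _ => isOpen_biInter_finset fun (p : S) _ => hS p p.2) hcover
  refine ⟨selections (t.image Prod.snd), t.image Prod.snd, fun H hH => ?_,
    fun K hK => exists_subset_of_isSelection_selections hK, ?_⟩
  · refine CompactlyContained.of_subset_biUnion hFt fun EI hEI => ?_
    obtain ⟨q, hqI, hqH⟩ := isSelection_of_mem_selections hH EI.2 (Finset.mem_image_of_mem _ hEI)
    exact (singleton_iff.1 ((htW hEI).2 q hqI)).mono_right (Set.subset_biUnion_of_mem hqH)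
  · simp only [Finset.mem_image]
    rintro _ ⟨EI, hEI, rfl⟩
    exact (htW hEI).1

theorem auxiliaryTo_vdash (hS : ∀ p ∈ S, IsOpen p) (hR : CapRound S) :
    AuxiliaryTo (subCover S) (Vdash (subCover S)) := by
  intro F H G hH hFH
  have hFH' : ⋂ p ∈ F, (p : Set X) ⊆ ⋃ h ∈ H, (h : Set X) := fun x hx => by
    obtain ⟨E, hxE, hEF⟩ := hR.exists_forall_subCover hx
    exact subset hS (hFH E hEF) hxE
  refine CompactlyContained.of_subset_biUnion (fun x hx => ?_) hH
  obtain ⟨h, hh, hxh⟩ := Set.mem_iUnion₂.1 (hFH' hx)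
  exact Set.mem_biUnion hh (by simp only [Finset.set_biInter_insert]; exact ⟨hxh, hx⟩)

end subCover

/-- **The compact cover relation of a family of open sets is an entailment, and a cover
relation when the family is `∩`-round.** -/
theorem subsetC_entailment_cover {X : Type*} [TopologicalSpace X] (S : Set (Set X))
    (hS : ∀ p ∈ S, IsOpen p) :
    Entailment (subCover S) ∧ (CapRound S → CoverRelation (subCover S)) :=
  ⟨⟨subCover.isUpperRel S, subCover.isLowerRel S, subCover.cutRel hS⟩, fun hR =>
    ⟨⟨subCover.isUpperRel S, subCover.isLowerRel S, subCover.cutTransitive hS,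
      subCover.divisible hS hR⟩, subCover.auxiliaryTo_vdash hS hR⟩⟩
end
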